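/- arXiv:2011.09593 — 2 statements merged into one kernel-verified Lean document; each statement's English description precedes it below -/
import Mathlib

section
/- For every natural number n, the centered period-5 alternating window sum of row 2n of Pascal's triangle with offset 2 equals the Fibonacci number of index 2n+1: Σ_{k∈ℤ} [ C(2n, n + 5k) − C(2n, n + 2 + 5k) ] = Fib(2n+1). -/
def zchoose (r : ℕ) (j : ℤ) : ℤ := if 0 ≤ j then (r.choose j.toNat : ℤ) else 0

lemma zchoose_neg (r : ℕ) {j : ℤ} (h : j < 0) : zchoose r j = 0 := by
  simp [zchoose, not_le.2 h]

lemma zchoose_big (r : ℕ) {j : ℤ} (h : (r : ℤ) < j) : zchoose r j = 0 := by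
  have h0 : 0 ≤ j := le_of_lt (lt_of_le_of_lt (Int.ofNat_nonneg r) h)
  have : r < j.toNat := by omega
  simp [zchoose, h0, Nat.choose_eq_zero_of_lt this]

noncomputable def S (m : ℕ) (a : ℤ) : ℤ := ∑ᶠ k : ℤ, zchoose m (a + 5 * k)

lemma S_support (m : ℕ) (a : ℤ) :
    (Function.support fun k : ℤ => zchoose m (a + 5 * k)).Finite := by
  apply Set.Finite.subset (Set.finite_Icc (-(a.natAbs : ℤ) - m) ((a.natAbs : ℤ) + m))
  intro k hk
  simp only [Function.mem_support] at hk
  have h1 : 0 ≤ a + 5 * k := by by_contra h; exact hk (zchoose_neg _ (by omega))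
  have h2 : a + 5 * k ≤ m := by by_contra h; exact hk (zchoose_big _ (by omega))
  simp only [Set.mem_Icc]; omega

lemma finsum_shift (f : ℤ → ℤ) (c : ℤ) : ∑ᶠ k : ℤ, f (k + c) = ∑ᶠ k, f k :=
  finsum_comp_equiv (Equiv.addRight c)

lemma finsum_negidx (f : ℤ → ℤ) : ∑ᶠ k : ℤ, f (-k) = ∑ᶠ k, f k :=
  finsum_comp_equiv (Equiv.neg ℤ)

lemma zchoose_pascal (r : ℕ) (j : ℤ) :
    zchoose (r + 1) j = zchoose r j + zchoose r (j - 1) := by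
  rcases lt_trichotomy j 0 with h | h | h
  · rw [zchoose_neg _ h, zchoose_neg _ (by omega), zchoose_neg _ (by omega)]; ring
  · subst h; simp [zchoose]
  · obtain ⟨a, rfl⟩ : ∃ a : ℕ, j = (a : ℤ) + 1 := ⟨(j - 1).toNat, by omega⟩
    have h1 : ((a : ℤ) + 1).toNat = a + 1 := by omega
    have h2 : ((a : ℤ) + 1 - 1).toNat = a := by omega
    simp only [zchoose, if_pos (by omega : (0:ℤ) ≤ (a:ℤ)+1),
      if_pos (by omega : (0:ℤ) ≤ (a:ℤ)+1-1), h1, h2, Nat.choose_succ_succ]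
    push_cast; ring

lemma zchoose_symm (r : ℕ) (j : ℤ) : zchoose r j = zchoose r (r - j) := by
  rcases lt_or_ge j 0 with h | h
  · rw [zchoose_neg _ h, zchoose_big _ (by omega)]
  rcases le_or_gt j r with h2 | h2
  · have h0 : (0:ℤ) ≤ (r:ℤ) - j := by omega
    have hj : j.toNat ≤ r := by omega
    have ht : ((r:ℤ) - j).toNat = r - j.toNat := by omega
    simp only [zchoose, if_pos h, if_pos h0, ht, Nat.choose_symm hj]
  · rw [zchoose_big _ h2, zchoose_neg _ (by omega)]

lemma S_pascal (m : ℕ) (a : ℤ) : S (m + 1) a = S m a + S m (a - 1) := by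
  unfold S
  rw [← finsum_add_distrib (S_support m a) (S_support m (a - 1))]
  exact finsum_congr fun k => by
    rw [zchoose_pascal]
    congr 1
    congr 1
    ring

lemma S_shift (m : ℕ) (a : ℤ) : S m (a + 5) = S m a := by
  unfold S
  rw [← finsum_shift (fun k => zchoose m (a + 5 * k)) 1]
  exact finsum_congr fun k => by congr 1; ring

lemma S_symm (m : ℕ) (a : ℤ) : S m ((m : ℤ) - a) = S m a := by
  unfold S
  rw [← finsum_negidx (fun k => zchoose m (a + 5 * k))]
  exact finsum_congr fun k => by
    rw [zchoose_symm m (a + 5 * (-k))]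
    congr 1
    ring

lemma S_pascal2 (m : ℕ) (a : ℤ) :
    S (m + 2) a = S m a + 2 * S m (a - 1) + S m (a - 2) := by
  rw [show m + 2 = (m + 1) + 1 from rfl, S_pascal, S_pascal (m) a, S_pascal m (a-1),
    show a - 1 - 1 = a - 2 by ring]
  ring

lemma S_zero_zero : S 0 0 = 1 := by
  unfold S
  rw [finsum_eq_single _ (0 : ℤ)]
  · simp [zchoose]
  · intro k hk
    rcases lt_or_ge k 0 with h | h
    · exact zchoose_neg _ (by omega)
    · exact zchoose_big _ (by push_cast; omega)

lemma S_zero (a : ℤ) (h1 : 0 < a) (h2 : a < 5) : S 0 a = 0 := by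
  unfold S
  apply finsum_eq_zero_of_forall_eq_zero
  intro k
  rcases lt_or_ge k 0 with h | h
  · exact zchoose_neg _ (by omega)
  · exact zchoose_big _ (by push_cast; omega)

lemma key (n : ℕ) :
    S (2 * n) n - S (2 * n) ((n : ℤ) + 2) = (Nat.fib (2 * n + 1) : ℤ) ∧
    S (2 * n) n - S (2 * n) ((n : ℤ) + 1) =
      (Nat.fib (2 * n + 1) : ℤ) - (Nat.fib (2 * n) : ℤ) := by
  induction n with
  | zero =>
    norm_num [S_zero_zero, S_zero 2 (by norm_num) (by norm_num),
      S_zero 1 (by norm_num) (by norm_num)]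
  | succ n ih =>
    obtain ⟨h1, h2⟩ := ih
    set x := S (2 * n) n with hx
    set y := S (2 * n) ((n : ℤ) + 1) with hysd
    set z := S (2 * n) ((n : ℤ) + 2) with hz
    have hym : S (2 * n) ((n : ℤ) - 1) = y := by
      rw [hysd, ← S_symm (2 * n) ((n : ℤ) + 1)]
      congr 1; push_cast; ring
    have hzm : S (2 * n) ((n : ℤ) - 2) = z := by
      rw [hz, ← S_symm (2 * n) ((n : ℤ) + 2)]
      congr 1; push_cast; ring
    have hzp : S (2 * n) ((n : ℤ) + 3) = z := by
      rw [← hzm, show (n : ℤ) + 3 = ((n : ℤ) - 2) + 5 by ring, S_shift]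
    have e2 : 2 * (n + 1) = 2 * n + 2 := by ring
    have hx' : S (2 * (n + 1)) ((n : ℤ) + 1) = y + 2 * x + y := by
      rw [e2, S_pascal2, show (n : ℤ) + 1 - 1 = (n : ℤ) by ring,
        show (n : ℤ) + 1 - 2 = (n : ℤ) - 1 by ring, hym, ← hx, ← hysd]
    have hy' : S (2 * (n + 1)) ((n : ℤ) + 2) = z + 2 * y + x := by
      rw [e2, S_pascal2, show (n : ℤ) + 2 - 1 = (n : ℤ) + 1 by ring,
        show (n : ℤ) + 2 - 2 = (n : ℤ) by ring, ← hx, ← hysd, ← hz]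
    have hz' : S (2 * (n + 1)) ((n : ℤ) + 3) = z + 2 * z + y := by
      rw [e2, S_pascal2, show (n : ℤ) + 3 - 1 = (n : ℤ) + 2 by ring,
        show (n : ℤ) + 3 - 2 = (n : ℤ) + 1 by ring, hzp, ← hysd, ← hz]
    have f1 : (Nat.fib (2 * (n + 1) + 1) : ℤ)
        = (Nat.fib (2 * n + 1) : ℤ) + (Nat.fib (2 * n + 2) : ℤ) := by
      rw [show 2 * (n + 1) + 1 = (2 * n + 1) + 2 by ring, Nat.fib_add_two]
      push_cast; ring
    have f2 : (Nat.fib (2 * n + 2) : ℤ)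
        = (Nat.fib (2 * n) : ℤ) + (Nat.fib (2 * n + 1) : ℤ) := by
      rw [Nat.fib_add_two]; push_cast; ring
    constructor
    · rw [show ((n + 1 : ℕ) : ℤ) = (n : ℤ) + 1 by push_cast; ring,
        show ((n : ℤ) + 1) + 2 = (n : ℤ) + 3 by ring, hx', hz', f1, f2]
      linarith
    · rw [show ((n + 1 : ℕ) : ℤ) = (n : ℤ) + 1 by push_cast; ring,
        show ((n : ℤ) + 1) + 1 = (n : ℤ) + 2 by ring, hx', hy', f1,
        show 2 * (n + 1) = 2 * n + 2 by ring, f2]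
      linarith

/-- The centered period-5 alternating window sum of row 2n of Pascal's triangle with
offset 2 equals the Fibonacci number Fib(2n+1). -/
theorem period_five_window_sum_offset_two (n : ℕ) :
    ∑ᶠ k : ℤ, (zchoose (2 * n) (n + 5 * k) - zchoose (2 * n) (n + 2 + 5 * k)) =
      (Nat.fib (2 * n + 1) : ℤ) := by
  have := (key n).1
  rw [← this]
  unfold S
  rw [finsum_sub_distrib (S_support (2 * n) n) (S_support (2 * n) ((n : ℤ) + 2))]
end

section
/- For every natural number n, the centered period-6 alternating window sum of row 2n of Pascal's triangle with offset 2 equals the ceiling of 3^n/2: Σ_{k∈ℤ} [ C(2n, n + 6k) − C(2n, n + 2 + 6k) ] = (3^n + 1)/2. -/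
lemma zchoose_zero_right (r : ℕ) : zchoose r 0 = 1 := by
  simp [zchoose]

lemma zchoose_of_neg {r : ℕ} {j : ℤ} (h : j < 0) : zchoose r j = 0 := by
  simp [zchoose, not_le.2 h]

lemma zchoose_of_lt {r : ℕ} {j : ℤ} (h : (r : ℤ) < j) : zchoose r j = 0 := by
  have hj : 0 ≤ j := by omega
  simp [zchoose, hj, Nat.choose_eq_zero_of_lt (show r < j.toNat by omega)]

lemma zchoose_succ (r : ℕ) (j : ℤ) :
    zchoose (r + 1) j = zchoose r (j - 1) + zchoose r j := by
  rcases lt_trichotomy j 0 with h | rfl | h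
  · rw [zchoose_of_neg h, zchoose_of_neg h, zchoose_of_neg (by omega), add_zero]
  · simp [zchoose]
  · have hj : j.toNat = (j - 1).toNat + 1 := by omega
    simp only [zchoose, if_pos h.le, if_pos (show (0 : ℤ) ≤ j - 1 by omega), hj,
      Nat.choose_succ_succ, Nat.cast_add]

lemma finite_support_zchoose_add_mul (r : ℕ) {p : ℤ} (hp : p ≠ 0) (t : ℤ) :
    (Function.support fun k : ℤ => zchoose r (t + p * k)).Finite := by
  refine (Set.finite_Icc (-(|t| + r)) (|t| + r)).subset fun k hk => ?_
  have hlo : 0 ≤ t + p * k := not_lt.1 fun h => hk (zchoose_of_neg h)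
  have hhi : t + p * k ≤ r := not_lt.1 fun h => hk (zchoose_of_lt h)
  have hk : |k| ≤ |p * k| := by
    rw [abs_mul]; exact le_mul_of_one_le_left (abs_nonneg k) (Int.one_le_abs hp)
  rw [Set.mem_Icc, ← abs_le]
  have := abs_le.2 (show -(|t| + r) ≤ p * k ∧ p * k ≤ |t| + r by
    constructor <;> cases abs_cases t <;> linarith)
  linarith

noncomputable def binomMultisection (r : ℕ) (p : ℤ) (t : ℤ) : ℤ := ∑ᶠ k : ℤ, zchoose r (t + p * k)

namespace binomMultisection

lemma succ (r : ℕ) {p : ℤ} (hp : p ≠ 0) (t : ℤ) :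
    binomMultisection (r + 1) p t = binomMultisection r p (t - 1) + binomMultisection r p t := by
  unfold binomMultisection
  rw [← finsum_add_distrib (finite_support_zchoose_add_mul r hp _)
    (finite_support_zchoose_add_mul r hp _)]
  simp only [zchoose_succ, sub_add_eq_add_sub]

lemma add_period (r : ℕ) (p : ℤ) (t : ℤ) :
    binomMultisection r p (t + p) = binomMultisection r p t := by
  unfold binomMultisection
  rw [← finsum_comp_equiv (Equiv.addRight (1 : ℤ)) (f := fun k => zchoose r (t + p * k))]
  congr 1 with k
  rw [Equiv.coe_addRight]
  ring_nf

lemma symm (r : ℕ) (p : ℤ) (t : ℤ) : binomMultisection r p t = binomMultisection r p (r - t) := by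
  unfold binomMultisection
  rw [← finsum_comp_equiv (Equiv.neg ℤ)]
  congr 1 with k
  rw [zchoose_symm, Equiv.neg_apply]
  ring_nf

lemma zero_row {p t : ℤ} (h0 : 0 ≤ t) (ht : t < p) :
    binomMultisection 0 p t = zchoose 0 t := by
  refine (finsum_eq_single _ 0 fun k hk => ?_).trans (by rw [mul_zero, add_zero])
  rcases lt_or_gt_of_ne hk with hk | hk
  · exact zchoose_of_neg (by nlinarith)
  · exact zchoose_of_lt (by push_cast; nlinarith)

lemma central_neg (n : ℕ) (p : ℤ) (t : ℤ) :
    binomMultisection (2 * n) p (n + -t) = binomMultisection (2 * n) p (n + t) := by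
  rw [symm]
  push_cast
  ring_nf

lemma central_succ (n : ℕ) {p : ℤ} (hp : p ≠ 0) (t : ℤ) :
    binomMultisection (2 * (n + 1)) p ((n + 1 : ℕ) + t) =
      binomMultisection (2 * n) p (n + (t - 1)) + 2 * binomMultisection (2 * n) p (n + t) +
        binomMultisection (2 * n) p (n + (t + 1)) := by
  rw [show 2 * (n + 1) = 2 * n + 1 + 1 by ring, succ _ hp, succ _ hp, succ _ hp]
  push_cast
  ring_nf

end binomMultisection

noncomputable def centralWindowDiff (p : ℤ) (n : ℕ) (t : ℤ) : ℤ :=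
  binomMultisection (2 * n) p (n + t) - binomMultisection (2 * n) p (n + (t + 2))

namespace centralWindowDiff

lemma succ {p : ℤ} (hp : p ≠ 0) (n : ℕ) (t : ℤ) :
    centralWindowDiff p (n + 1) t =
      centralWindowDiff p n (t - 1) + 2 * centralWindowDiff p n t +
        centralWindowDiff p n (t + 1) := by
  simp only [centralWindowDiff, binomMultisection.central_succ n hp]
  ring_nf

lemma neg_one (p : ℤ) (n : ℕ) : centralWindowDiff p n (-1) = 0 := by
  rw [centralWindowDiff, binomMultisection.central_neg]
  norm_num

lemma six_two (n : ℕ) : centralWindowDiff 6 n 2 = 0 := by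
  have h := binomMultisection.add_period (2 * n) 6 (n + -4)
  rw [binomMultisection.central_neg] at h
  rw [centralWindowDiff, sub_eq_zero]
  convert h using 2 <;> ring

lemma six_zero_add_one_and_sub_one (n : ℕ) :
    centralWindowDiff 6 n 0 + centralWindowDiff 6 n 1 = 3 ^ n ∧
      centralWindowDiff 6 n 0 - centralWindowDiff 6 n 1 = 1 := by
  induction n with
  | zero =>
    simp only [centralWindowDiff, Nat.cast_zero, mul_zero, zero_add, pow_zero]
    rw [binomMultisection.zero_row, binomMultisection.zero_row, binomMultisection.zero_row,
      binomMultisection.zero_row] <;> norm_num [zchoose_of_lt, zchoose_zero_right]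
  | succ n ih =>
    have h0 := succ (p := 6) (by norm_num) n 0
    have h1 := succ (p := 6) (by norm_num) n 1
    norm_num [neg_one, six_two] at h0 h1
    rw [h0, h1, pow_succ]
    constructor <;> linarith [ih.1, ih.2]

end centralWindowDiff

/-- The centered period-6 alternating window sum of row 2n of Pascal's triangle with
offset 2 equals ⌈3^n / 2⌉ = (3^n + 1)/2. -/
theorem period_six_window_sum_offset_two (n : ℕ) :
    ∑ᶠ k : ℤ, (zchoose (2 * n) (n + 6 * k) - zchoose (2 * n) (n + 2 + 6 * k)) =
      (3 ^ n + 1) / 2 := by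
  have hdiff : ∑ᶠ k : ℤ, (zchoose (2 * n) (n + 6 * k) - zchoose (2 * n) (n + 2 + 6 * k)) =
      centralWindowDiff 6 n 0 := by
    rw [finsum_sub_distrib (finite_support_zchoose_add_mul _ (by norm_num) _)
      (finite_support_zchoose_add_mul _ (by norm_num) _)]
    simp [centralWindowDiff, binomMultisection]
  obtain ⟨hsum, hsub⟩ := centralWindowDiff.six_zero_add_one_and_sub_one n
  omega
end
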